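/- Let g ∈ H, the Sobolev space of functions on (-1,1) with ∫ g dϱ = 0, g ∈ L²(ϱ), g' ∈ L²(μ_sc), equipped with norm ‖g‖² = ∫ g'(x)² μ_sc(dx). Then for all x, y ∈ (-1,1), |g(x) - g(y)| ≤ 2‖g‖·|arcsin(x) - arcsin(y)|^{1/2}; in particular g is (1/4)-Hölder continuous on [-1,1] with |g(x)-g(y)| ≤ C‖g‖·|x-y|^{1/4} for a universal constant C. -/

import Mathlib

open MeasureTheory Real Set

/-- Density of the arcsine law on `(-1,1)`. -/
noncomputable def arcsineDensity (x : ℝ) : ℝ := 1 / (Real.pi * Real.sqrt (1 - x ^ 2))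

/-- Density of the semicircle law on `(-1,1)`. -/
noncomputable def semicircleDensity (x : ℝ) : ℝ := (2 / Real.pi) * Real.sqrt (1 - x ^ 2)

/-!
For `y ≤ x` in `(-1, 1)`, Cauchy–Schwarz against the weight `w = semicircleDensity` gives
`|g x - g y| ≤ (∫_y^x g'² w)^{1/2} (∫_y^x w⁻¹)^{1/2}`, and `∫_y^x w⁻¹ = (π/2)(arcsin x - arcsin y)`
because `arcsin' t = (1 - t²)^{-1/2}`; since `π/2 ≤ 4` this is the first bound.

The second follows because `arcsin` is `1/2`-Hölder: with `d` and `m` the half-difference and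
half-sum of `arcsin x` and `arcsin y`, `x - y = 2 sin d cos m`, and `cos m ≥ sin d ≥ 2d/π`
(Jordan), so `(arcsin x - arcsin y)² ≤ (π²/2) |x - y|`.
-/

section CauchySchwarz

variable {α : Type*} [MeasurableSpace α] {μ : Measure α}

theorem integral_mul_le_sqrt_mul_sqrt {u v : α → ℝ} (hu0 : 0 ≤ᵐ[μ] u) (hv0 : 0 ≤ᵐ[μ] v)
    (hu : MemLp u 2 μ) (hv : MemLp v 2 μ) :
    ∫ a, u a * v a ∂μ ≤ √(∫ a, u a ^ 2 ∂μ) * √(∫ a, v a ^ 2 ∂μ) := by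
  have := integral_mul_le_Lp_mul_Lq_of_nonneg Real.HolderConjugate.two_two hu0 hv0
    (by simpa using hu) (by simpa using hv)
  simpa only [Real.sqrt_eq_rpow, Real.rpow_two] using this

theorem integrable_and_integral_abs_le_of_weight {f w : α → ℝ} (hf : AEStronglyMeasurable f μ)
    (hw : AEMeasurable w μ) (hw_pos : ∀ᵐ a ∂μ, 0 < w a)
    (hfw : Integrable (fun a => f a ^ 2 * w a) μ) (hw_inv : Integrable (fun a => (w a)⁻¹) μ) :
    Integrable f μ ∧ ∫ a, |f a| ∂μ ≤ √(∫ a, f a ^ 2 * w a ∂μ) * √(∫ a, (w a)⁻¹ ∂μ) := by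
  set u := fun a => |f a| * √(w a)
  set v := fun a => (√(w a))⁻¹
  have hu_sq : (fun a => u a ^ 2) =ᵐ[μ] fun a => f a ^ 2 * w a := by
    filter_upwards [hw_pos] with a ha
    simp only [u, mul_pow, sq_abs, sq_sqrt ha.le]
  have hv_sq : (fun a => v a ^ 2) =ᵐ[μ] fun a => (w a)⁻¹ := by
    filter_upwards [hw_pos] with a ha
    simp only [v, inv_pow, sq_sqrt ha.le]
  have huv : (fun a => |f a|) =ᵐ[μ] fun a => u a * v a := by
    filter_upwards [hw_pos] with a ha
    simp only [u, v, mul_inv_cancel_right₀ (sqrt_pos.2 ha).ne']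
  have hu : MemLp u 2 μ :=
    (memLp_two_iff_integrable_sq (hf.norm.mul hw.sqrt.aestronglyMeasurable)).2
      (hfw.congr hu_sq.symm)
  have hv : MemLp v 2 μ :=
    (memLp_two_iff_integrable_sq hw.sqrt.inv.aestronglyMeasurable).2 (hw_inv.congr hv_sq.symm)
  refine ⟨(integrable_norm_iff hf).1 ((hu.integrable_mul hv).congr huv.symm), ?_⟩
  calc ∫ a, |f a| ∂μ = ∫ a, u a * v a ∂μ := integral_congr_ae huv
    _ ≤ √(∫ a, u a ^ 2 ∂μ) * √(∫ a, v a ^ 2 ∂μ) :=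
      integral_mul_le_sqrt_mul_sqrt (.of_forall fun a => by positivity)
        (.of_forall fun a => by positivity) hu hv
    _ = _ := by rw [integral_congr_ae hu_sq, integral_congr_ae hv_sq]

end CauchySchwarz

theorem abs_sub_le_sqrt_mul_sqrt_of_hasDerivAt {f f' w : ℝ → ℝ} {a b : ℝ} (hab : a ≤ b)
    (hf : ∀ t ∈ Icc a b, HasDerivAt f (f' t) t) (hw : ContinuousOn w (Icc a b))
    (hw_pos : ∀ t ∈ Icc a b, 0 < w t) (hf'w : IntegrableOn (fun t => f' t ^ 2 * w t) (Ioc a b)) :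
    |f b - f a| ≤ √(∫ t in a..b, f' t ^ 2 * w t) * √(∫ t in a..b, (w t)⁻¹) := by
  have hf'_meas : AEStronglyMeasurable f' (volume.restrict (Ioc a b)) :=
    (measurable_deriv f).aestronglyMeasurable.congr <| ae_restrict_of_forall_mem measurableSet_Ioc
      fun t ht => (hf t (Ioc_subset_Icc_self ht)).deriv
  have hw_inv : IntegrableOn (fun t => (w t)⁻¹) (Ioc a b) :=
    ((hw.inv₀ fun t ht => (hw_pos t ht).ne').integrableOn_Icc).mono_set Ioc_subset_Icc_self
  obtain ⟨hf'_int, hle⟩ := integrable_and_integral_abs_le_of_weight hf'_meas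
    ((hw.mono Ioc_subset_Icc_self).aemeasurable measurableSet_Ioc)
    (ae_restrict_of_forall_mem measurableSet_Ioc fun t ht => hw_pos t (Ioc_subset_Icc_self ht))
    hf'w hw_inv
  rw [intervalIntegral.integral_of_le hab, intervalIntegral.integral_of_le hab,
    ← intervalIntegral.integral_eq_sub_of_hasDerivAt (fun t ht => hf t (uIcc_of_le hab ▸ ht))
      ((intervalIntegrable_iff_integrableOn_Ioc_of_le hab).2 hf'_int)]
  calc |∫ t in a..b, f' t| ≤ ∫ t in a..b, |f' t| :=
        intervalIntegral.abs_integral_le_integral_abs hab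
    _ = ∫ t in Ioc a b, |f' t| := intervalIntegral.integral_of_le hab
    _ ≤ _ := hle

theorem semicircleDensity_nonneg (t : ℝ) : 0 ≤ semicircleDensity t := by
  unfold semicircleDensity; positivity

theorem semicircleDensity_pos {t : ℝ} (ht : t ∈ Ioo (-1 : ℝ) 1) : 0 < semicircleDensity t := by
  unfold semicircleDensity
  have : 0 < 1 - t ^ 2 := by nlinarith [ht.1, ht.2]
  positivity

theorem continuous_semicircleDensity : Continuous semicircleDensity := by
  unfold semicircleDensity; fun_prop

theorem integral_inv_semicircleDensity {x y : ℝ} (hx : x ∈ Ioo (-1 : ℝ) 1)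
    (hy : y ∈ Ioo (-1 : ℝ) 1) :
    ∫ t in y..x, (semicircleDensity t)⁻¹ = π / 2 * (arcsin x - arcsin y) := by
  have hsub : uIcc y x ⊆ Ioo (-1 : ℝ) 1 := ordConnected_Ioo.uIcc_subset hy hx
  rw [mul_sub]
  refine intervalIntegral.integral_eq_sub_of_hasDerivAt (f := fun t => π / 2 * arcsin t)
    (fun t ht => ?_) ?_
  · have ht' := hsub ht
    refine ((hasDerivAt_arcsin ht'.1.ne' ht'.2.ne).const_mul (π / 2)).congr_deriv ?_
    unfold semicircleDensity
    field_simp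
  · exact (continuous_semicircleDensity.continuousOn.inv₀
      fun t ht => (semicircleDensity_pos (hsub ht)).ne').intervalIntegrable

theorem sq_arcsin_sub_arcsin_le {x y : ℝ} (hx : x ∈ Icc (-1 : ℝ) 1) (hy : y ∈ Icc (-1 : ℝ) 1) :
    (arcsin x - arcsin y) ^ 2 ≤ π ^ 2 / 2 * |x - y| := by
  wlog hyx : y ≤ x generalizing x y
  · simpa only [abs_sub_comm, ← neg_sub (arcsin x), neg_sq] using this hy hx (le_of_not_ge hyx)
  set d := (arcsin x - arcsin y) / 2 with hd
  set m := (arcsin x + arcsin y) / 2 with hm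
  have hx_le := arcsin_le_pi_div_two x
  have hy_ge := neg_pi_div_two_le_arcsin y
  have hd_nonneg : 0 ≤ d := by rw [hd]; linarith [arcsin_le_arcsin hyx]
  have hsin : 2 * d ≤ π * sin d := by
    have := mul_le_sin hd_nonneg (by rw [hd]; linarith)
    rwa [div_mul_eq_mul_div, div_le_iff₀' pi_pos] at this
  have hcos : sin d ≤ cos m := by
    rw [← cos_pi_div_two_sub, ← cos_abs m]
    exact cos_le_cos_of_nonneg_of_le_pi (abs_nonneg m) (by linarith [pi_pos])
      (abs_le.2 ⟨by rw [hm, hd]; linarith, by rw [hm, hd]; linarith⟩)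
  have hxy : x - y = 2 * sin d * cos m := by
    rw [← sin_sub_sin, sin_arcsin hx.1 hx.2, sin_arcsin hy.1 hy.2]
  rw [abs_of_nonneg (sub_nonneg.2 hyx), hxy]
  have hsin_nonneg : 0 ≤ sin d := sin_nonneg_of_nonneg_of_le_pi hd_nonneg (by rw [hd]; linarith)
  calc (arcsin x - arcsin y) ^ 2 = (2 * d) ^ 2 := by ring
    _ ≤ (π * sin d) ^ 2 := pow_le_pow_left₀ (by linarith) hsin 2
    _ = π ^ 2 * (sin d * sin d) := by ring
    _ ≤ π ^ 2 * (sin d * cos m) := by gcongr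
    _ = π ^ 2 / 2 * (2 * sin d * cos m) := by ring

theorem sqrt_abs_arcsin_sub_arcsin_le {x y : ℝ} (hx : x ∈ Icc (-1 : ℝ) 1)
    (hy : y ∈ Icc (-1 : ℝ) 1) :
    √|arcsin x - arcsin y| ≤ (π ^ 2 / 2) ^ ((1 : ℝ) / 4) * |x - y| ^ ((1 : ℝ) / 4) := by
  have hsqrt : √|arcsin x - arcsin y| = ((arcsin x - arcsin y) ^ 2) ^ ((1 : ℝ) / 4) := by
    rw [← sq_abs, ← rpow_natCast, ← rpow_mul (abs_nonneg _), sqrt_eq_rpow]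
    norm_num
  rw [hsqrt, ← mul_rpow (by positivity) (abs_nonneg _)]
  exact rpow_le_rpow (sq_nonneg _) (sq_arcsin_sub_arcsin_le hx hy) (by norm_num)

theorem abs_sub_le_two_mul_sqrt_mul_sqrt_abs_arcsin_sub {g g' : ℝ → ℝ}
    (hg : ∀ x ∈ Ioo (-1 : ℝ) 1, HasDerivAt g (g' x) x)
    (hg' : IntegrableOn (fun x => g' x ^ 2 * semicircleDensity x) (Ioo (-1 : ℝ) 1))
    {x y : ℝ} (hx : x ∈ Ioo (-1 : ℝ) 1) (hy : y ∈ Ioo (-1 : ℝ) 1) :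
    |g x - g y| ≤ 2 * √(∫ t in Ioo (-1 : ℝ) 1, g' t ^ 2 * semicircleDensity t) *
      √|arcsin x - arcsin y| := by
  wlog hyx : y ≤ x generalizing x y
  · simpa only [abs_sub_comm] using this hy hx (le_of_not_ge hyx)
  have hsub : Icc y x ⊆ Ioo (-1 : ℝ) 1 := ordConnected_Ioo.out hy hx
  have hnorm : ∫ t in y..x, g' t ^ 2 * semicircleDensity t ≤
      ∫ t in Ioo (-1 : ℝ) 1, g' t ^ 2 * semicircleDensity t := by
    rw [intervalIntegral.integral_of_le hyx]
    exact setIntegral_mono_set hg'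
      (.of_forall fun t => mul_nonneg (sq_nonneg _) (semicircleDensity_nonneg t))
      (Ioc_subset_Icc_self.trans hsub).eventuallyLE
  have hπ : √(π / 2) ≤ 2 := sqrt_le_iff.2 ⟨zero_le_two, by linarith [pi_le_four]⟩
  calc |g x - g y|
      ≤ √(∫ t in y..x, g' t ^ 2 * semicircleDensity t) * √(∫ t in y..x, (semicircleDensity t)⁻¹) :=
        abs_sub_le_sqrt_mul_sqrt_of_hasDerivAt hyx (fun t ht => hg t (hsub ht))
          continuous_semicircleDensity.continuousOn (fun t ht => semicircleDensity_pos (hsub ht))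
          (hg'.mono_set (Ioc_subset_Icc_self.trans hsub))
    _ ≤ √(∫ t in Ioo (-1 : ℝ) 1, g' t ^ 2 * semicircleDensity t) *
          (√(π / 2) * √|arcsin x - arcsin y|) := by
        rw [integral_inv_semicircleDensity hx hy, ← sqrt_mul pi_div_two_pos.le,
          abs_of_nonneg (sub_nonneg.2 (arcsin_le_arcsin hyx))]
        gcongr
    _ ≤ 2 * √(∫ t in Ioo (-1 : ℝ) 1, g' t ^ 2 * semicircleDensity t) *
          √|arcsin x - arcsin y| := by
        rw [mul_left_comm, ← mul_assoc]
        gcongr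

/-- for `g` in the Sobolev space `H` (mean zero w.r.t. the arcsine law,
`g ∈ L²(ϱ)`, `g' ∈ L²(μ_sc)`), one has
`|g(x)-g(y)| ≤ 2‖g‖·|arcsin x - arcsin y|^{1/2}` for `x,y ∈ (-1,1)`, and `g` is
`(1/4)`-Hölder with a universal constant: `|g(x)-g(y)| ≤ C‖g‖·|x-y|^{1/4}`. -/
theorem sobolev_holder_bound :
    ∃ C : ℝ, 0 < C ∧
      ∀ (g g' : ℝ → ℝ),
        (∀ x ∈ Ioo (-1 : ℝ) 1, HasDerivAt g (g' x) x) →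
        IntegrableOn (fun x => g x ^ 2 * arcsineDensity x) (Ioo (-1 : ℝ) 1) →
        IntegrableOn (fun x => g' x ^ 2 * semicircleDensity x) (Ioo (-1 : ℝ) 1) →
        (∫ x in Ioo (-1 : ℝ) 1, g x * arcsineDensity x) = 0 →
        ∀ x ∈ Ioo (-1 : ℝ) 1, ∀ y ∈ Ioo (-1 : ℝ) 1,
          |g x - g y| ≤ 2 * Real.sqrt (∫ t in Ioo (-1 : ℝ) 1, g' t ^ 2 * semicircleDensity t) *
              Real.sqrt |Real.arcsin x - Real.arcsin y| ∧
          |g x - g y| ≤ C * Real.sqrt (∫ t in Ioo (-1 : ℝ) 1, g' t ^ 2 * semicircleDensity t) *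
              |x - y| ^ ((1 : ℝ) / 4) := by
  refine ⟨2 * (π ^ 2 / 2) ^ ((1 : ℝ) / 4), by positivity, ?_⟩
  intro g g' hg _ hg' _ x hx y hy
  have harcsin := abs_sub_le_two_mul_sqrt_mul_sqrt_abs_arcsin_sub hg hg' hx hy
  refine ⟨harcsin, harcsin.trans ?_⟩
  calc 2 * √(∫ t in Ioo (-1 : ℝ) 1, g' t ^ 2 * semicircleDensity t) * √|arcsin x - arcsin y|
      ≤ 2 * √(∫ t in Ioo (-1 : ℝ) 1, g' t ^ 2 * semicircleDensity t) *
          ((π ^ 2 / 2) ^ ((1 : ℝ) / 4) * |x - y| ^ ((1 : ℝ) / 4)) := by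
        gcongr
        exact sqrt_abs_arcsin_sub_arcsin_le (Ioo_subset_Icc_self hx) (Ioo_subset_Icc_self hy)
    _ = _ := by ring
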